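/- (Parabolic gain of regularity for the semigroup.) Let m₁, m₂ ∈ ℝ satisfy m₂ − m₁ − 4 < −n. Then there exists K > 0 such that for every zero-mean ψ₀ with ‖ψ₀‖_{PM^{m₁}} < ∞, one has Sψ₀ ∈ 𝒳^{m₂} with the estimate ‖Sψ₀‖_{𝒳^{m₂}} = Σ_{k∈ℤⁿ_*} ∫_0^T |k|^{m₂} e^{−tσ(k)} |ψ̂₀(k)| dt ≤ K ‖ψ₀‖_{PM^{m₁}}. -/

import Mathlib

open MeasureTheory
open scoped BigOperators ENNReal NNReal

noncomputable section

/-- Euclidean norm `|k|` of a lattice point `k ∈ ℤⁿ`. -/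
def knorm {n : ℕ} (k : Fin n → ℤ) : ℝ := Real.sqrt (∑ i, ((k i : ℝ)) ^ 2)

/-- The Fourier symbol `σ(k)` of `Δ² + Δ` on the torus `∏ᵢ [0, Lᵢ]`. -/
def ksSymbol {n : ℕ} (L : Fin n → ℝ) (k : Fin n → ℤ) : ℝ :=
  (∑ i, (2 * Real.pi / L i) ^ 2 * ((k i : ℝ)) ^ 2) ^ 2
    - ∑ i, (2 * Real.pi / L i) ^ 2 * ((k i : ℝ)) ^ 2

/-- The time interval `[0, T]`, where `T = ⊤` is allowed (giving `[0, ∞)`). -/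
def timeSet (T : ℝ≥0∞) : Set ℝ := {t : ℝ | 0 ≤ t ∧ ENNReal.ofReal t ≤ T}

/-- Case A (`Lᵢ < 2π` for all `i` and `T = ∞`) or Case B (`T ∈ (0, ∞)`). -/
def CaseAB {n : ℕ} (L : Fin n → ℝ) (T : ℝ≥0∞) : Prop :=
  (T = ⊤ ∧ ∀ i, L i < 2 * Real.pi) ∨ (0 < T ∧ T ≠ ⊤)

/-- `‖f‖_{Y^m} = Σ_{k ∈ ℤⁿ_*} |k|^m |f̂(k)|` (zero-mean functions are identified with
their Fourier coefficient sequences on `ℤⁿ_* = ℤⁿ \ {0}`). -/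
def Ynorm {n : ℕ} (m : ℝ) (f : (Fin n → ℤ) → ℂ) : ℝ≥0∞ :=
  ∑' k : {k : Fin n → ℤ // k ≠ 0}, ENNReal.ofReal (knorm k.1 ^ m * ‖f k.1‖)

/-- `‖f‖_{𝒴^m} = Σ_{k ∈ ℤⁿ_*} sup_{t ∈ [0,T]} |k|^m |f̂(t,k)|`. -/
def calYnorm {n : ℕ} (T : ℝ≥0∞) (m : ℝ) (f : ℝ → (Fin n → ℤ) → ℂ) : ℝ≥0∞ :=
  ∑' k : {k : Fin n → ℤ // k ≠ 0},
    ⨆ t ∈ timeSet T, ENNReal.ofReal (knorm k.1 ^ m * ‖f t k.1‖)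

/-- `‖f‖_{𝒳^m} = Σ_{k ∈ ℤⁿ_*} ∫_0^T |k|^m |f̂(t,k)| dt`. -/
def calXnorm {n : ℕ} (T : ℝ≥0∞) (m : ℝ) (f : ℝ → (Fin n → ℤ) → ℂ) : ℝ≥0∞ :=
  ∑' k : {k : Fin n → ℤ // k ≠ 0},
    ∫⁻ t in timeSet T, ENNReal.ofReal (knorm k.1 ^ m * ‖f t k.1‖)

/-- `‖f‖_{PM^m} = sup_{k ∈ ℤⁿ_*} |k|^m |f̂(k)|`. -/
def PMnorm {n : ℕ} (m : ℝ) (f : (Fin n → ℤ) → ℂ) : ℝ≥0∞ :=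
  ⨆ k : {k : Fin n → ℤ // k ≠ 0}, ENNReal.ofReal (knorm k.1 ^ m * ‖f k.1‖)

/-- `‖f‖_{𝒫ℳ^m} = sup_{t ∈ [0,T]} sup_{k ∈ ℤⁿ_*} |k|^m |f̂(t,k)|`. -/
def calPMnorm {n : ℕ} (T : ℝ≥0∞) (m : ℝ) (f : ℝ → (Fin n → ℤ) → ℂ) : ℝ≥0∞ :=
  ⨆ t ∈ timeSet T, ⨆ k : {k : Fin n → ℤ // k ≠ 0},
    ENNReal.ofReal (knorm k.1 ^ m * ‖f t k.1‖)

/-- The semigroup `S`, acting on Fourier coefficients: `(Sψ₀)^(t,k) = e^{-tσ(k)} ψ̂₀(k)`. -/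
def ksSemigroup {n : ℕ} (L : Fin n → ℝ) (ψ₀ : (Fin n → ℤ) → ℂ) :
    ℝ → (Fin n → ℤ) → ℂ :=
  fun t k => (Real.exp (-(t * ksSymbol L k)) : ℂ) * ψ₀ k

/-- The (normalized) bilinear operator `B`, given on Fourier coefficients by
`B̂(F,G)(t,k) = -∫_0^t e^{-(t-s)σ(k)} Σ_{j ∈ ℤⁿ_*, j ≠ k} ((k-j)·j) F̂(s,k-j) Ĝ(s,j) ds`. -/
def ksBilinear {n : ℕ} (L : Fin n → ℝ) (F G : ℝ → (Fin n → ℤ) → ℂ) :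
    ℝ → (Fin n → ℤ) → ℂ :=
  fun t k =>
    -∫ s in Set.Ioc (0 : ℝ) t,
      (Real.exp (-((t - s) * ksSymbol L k)) : ℂ) *
        ∑' j : {j : Fin n → ℤ // j ≠ 0 ∧ j ≠ k},
          ((∑ i, ((k i : ℝ) - (j.1 i : ℝ)) * (j.1 i : ℝ) : ℝ) : ℂ) *
            F s (k - j.1) * G s j.1

/-- `ψ` is a mild solution of the Kuramoto–Sivashinsky equation on `[0,T]` with data `ψ₀`:
`ψ̂(t,k) = e^{-tσ(k)} ψ̂₀(k) - (1/2) B̂(ψ,ψ)(t,k)` for all `t ∈ [0,T]`, `k ∈ ℤⁿ_*`. -/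
def IsMildSolution {n : ℕ} (L : Fin n → ℝ) (T : ℝ≥0∞)
    (ψ₀ : (Fin n → ℤ) → ℂ) (ψ : ℝ → (Fin n → ℤ) → ℂ) : Prop :=
  ∀ t ∈ timeSet T, ∀ k : Fin n → ℤ, k ≠ 0 →
    ψ t k = (Real.exp (-(t * ksSymbol L k)) : ℂ) * ψ₀ k
      - (1 / 2 : ℂ) * ksBilinear L ψ ψ t k

/-!
The semigroup is diagonal in Fourier space, so the `𝒳^{m₂}` norm of `S ψ₀` is at most
`‖ψ₀‖_{PM^{m₁}} Σ_{k ≠ 0} |k|^{m₂ - m₁} ∫_0^T e^{-tσ(k)} dt`. If `c ≤ (2π/Lᵢ)²` for all `i`, then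
`σ(k) ≥ c²|k|⁴/2 - 1/2`, and `σ(k) ≥ (c² - c)|k|⁴` for `k ≠ 0`. In Case B the first bound gives
`∫_0^T e^{-tσ(k)} dt ≤ e^{T/2} / (c²|k|⁴/2)`; in Case A one may take `c > 1`, and the second gives
`∫_0^∞ e^{-tσ(k)} dt ≤ 1 / ((c² - c)|k|⁴)`. Either way the time integral is `O(|k|⁻⁴)`, and the
remaining lattice sum `Σ_{k ≠ 0} |k|^{m₂ - m₁ - 4}` converges because `m₂ - m₁ - 4 < -n`.
-/

section Lattice

variable {n : ℕ}

def intToEuclidean (k : Fin n → ℤ) : EuclideanSpace ℝ (Fin n) :=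
  WithLp.toLp 2 fun i => (k i : ℝ)

lemma intToEuclidean_injective : Function.Injective (intToEuclidean (n := n)) := by
  intro k l h
  funext i
  simpa [intToEuclidean] using congr_fun (congrArg WithLp.ofLp h) i

lemma intToEuclidean_mem_span (k : Fin n → ℤ) :
    intToEuclidean k ∈
      Submodule.span ℤ (Set.range (EuclideanSpace.basisFun (Fin n) ℝ).toBasis) := by
  rw [Module.Basis.mem_span_iff_repr_mem]
  intro i
  simp [intToEuclidean]

lemma knorm_eq_norm (k : Fin n → ℤ) : knorm k = ‖intToEuclidean k‖ := by
  simp [knorm, intToEuclidean, EuclideanSpace.norm_eq]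

lemma knorm_nonneg (k : Fin n → ℤ) : 0 ≤ knorm k := Real.sqrt_nonneg _

lemma sq_knorm (k : Fin n → ℤ) : knorm k ^ 2 = ∑ i, (k i : ℝ) ^ 2 :=
  Real.sq_sqrt (Finset.sum_nonneg fun _ _ => sq_nonneg _)

lemma one_le_knorm {k : Fin n → ℤ} (hk : k ≠ 0) : 1 ≤ knorm k := by
  obtain ⟨i, hi⟩ := Function.ne_iff.mp hk
  calc (1 : ℝ) ≤ |(k i : ℝ)| := by exact_mod_cast Int.one_le_abs hi
    _ = ‖intToEuclidean k i‖ := (Real.norm_eq_abs _).symm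
    _ ≤ knorm k := knorm_eq_norm k ▸ PiLp.norm_apply_le _ _

lemma summable_knorm_rpow {p : ℝ} (hp : p < -n) :
    Summable fun k : Fin n → ℤ => knorm k ^ p := by
  set Λ := Submodule.span ℤ (Set.range (EuclideanSpace.basisFun (Fin n) ℝ).toBasis)
  have hΛ : Summable fun z : Λ => ‖z‖ ^ p :=
    ZLattice.summable_norm_rpow Λ p (by rwa [ZLattice.rank ℝ, finrank_euclideanSpace_fin])
  have hinj :
      Function.Injective fun k => (⟨intToEuclidean k, intToEuclidean_mem_span k⟩ : Λ) :=
    fun k l h => intToEuclidean_injective (congrArg Subtype.val h)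
  exact (hΛ.comp_injective hinj).congr fun k => by rw [knorm_eq_norm]; rfl

lemma tsum_ofReal_knorm_rpow_ne_top {p : ℝ} (hp : p < -n) :
    ∑' k : {k : Fin n → ℤ // k ≠ 0}, ENNReal.ofReal (knorm k.1 ^ p) ≠ ⊤ := by
  rw [← ENNReal.ofReal_tsum_of_nonneg (fun k : {k : Fin n → ℤ // k ≠ 0} =>
    Real.rpow_nonneg (knorm_nonneg k.1) p) ((summable_knorm_rpow hp).subtype _)]
  exact ENNReal.ofReal_ne_top

end Lattice

lemma lintegral_Ioi_exp_neg_mul {a : ℝ} (ha : 0 < a) :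
    ∫⁻ t in Set.Ioi 0, ENNReal.ofReal (Real.exp (-a * t)) = ENNReal.ofReal (1 / a) := by
  have ha' : -a < 0 := neg_lt_zero.mpr ha
  rw [← ofReal_integral_eq_lintegral_ofReal (integrableOn_exp_mul_Ioi ha' 0)
    (Filter.Eventually.of_forall fun t => (Real.exp_pos _).le), integral_exp_mul_Ioi ha']
  simp [neg_div]

/-- The hypothesis says `e^{-tσ} ≤ e^B e^{-at}` on `s`. -/
lemma setLIntegral_exp_neg_mul_le {s : Set ℝ} (hs : s ⊆ Set.Ici 0) {σ a B : ℝ} (ha : 0 < a)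
    (h : ∀ t ∈ s, t * (a - σ) ≤ B) :
    ∫⁻ t in s, ENNReal.ofReal (Real.exp (-(t * σ))) ≤ ENNReal.ofReal (Real.exp B / a) := by
  calc ∫⁻ t in s, ENNReal.ofReal (Real.exp (-(t * σ)))
      ≤ ∫⁻ t in s, ENNReal.ofReal (Real.exp B) * ENNReal.ofReal (Real.exp (-a * t)) := by
        refine setLIntegral_mono (by fun_prop) fun t ht => ?_
        rw [← ENNReal.ofReal_mul (Real.exp_pos B).le, ← Real.exp_add]
        gcongr
        linarith [h t ht]
    _ ≤ ∫⁻ t in Set.Ioi 0,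
          ENNReal.ofReal (Real.exp B) * ENNReal.ofReal (Real.exp (-a * t)) := by
        rw [setLIntegral_congr Ioi_ae_eq_Ici]
        exact lintegral_mono_set hs
    _ = ENNReal.ofReal (Real.exp B / a) := by
        rw [lintegral_const_mul' _ _ ENNReal.ofReal_ne_top, lintegral_Ioi_exp_neg_mul ha,
          ← ENNReal.ofReal_mul (Real.exp_pos B).le, mul_one_div]

lemma exists_lt_le_of_forall_lt {ι : Type*} [Finite ι] {w : ι → ℝ} {a : ℝ}
    (h : ∀ i, a < w i) : ∃ c, a < c ∧ ∀ i, c ≤ w i := by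
  cases isEmpty_or_nonempty ι
  · exact ⟨a + 1, by linarith, isEmptyElim⟩
  · obtain ⟨i₀, hi₀⟩ := Finite.exists_min w
    exact ⟨w i₀, h i₀, hi₀⟩

section Symbol

variable {n : ℕ} {L : Fin n → ℝ} {c : ℝ}

lemma mul_sq_knorm_le (hc : ∀ i, c ≤ (2 * Real.pi / L i) ^ 2) (k : Fin n → ℤ) :
    c * knorm k ^ 2 ≤ ∑ i, (2 * Real.pi / L i) ^ 2 * (k i : ℝ) ^ 2 := by
  rw [sq_knorm, Finset.mul_sum]
  gcongr with i
  exact hc i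

lemma sq_div_two_mul_knorm_pow_four_sub_half_le_ksSymbol (hc₀ : 0 ≤ c)
    (hc : ∀ i, c ≤ (2 * Real.pi / L i) ^ 2) (k : Fin n → ℤ) :
    c ^ 2 / 2 * knorm k ^ 4 - 1 / 2 ≤ ksSymbol L k := by
  have hX := mul_sq_knorm_le hc k
  have hy : 0 ≤ c * knorm k ^ 2 := by positivity
  unfold ksSymbol
  set X := ∑ i, (2 * Real.pi / L i) ^ 2 * (k i : ℝ) ^ 2
  nlinarith [sq_nonneg (X - 1), mul_le_mul hX hX hy (hy.trans hX)]

lemma sq_sub_self_mul_knorm_pow_four_le_ksSymbol (hc₁ : 1 ≤ c)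
    (hc : ∀ i, c ≤ (2 * Real.pi / L i) ^ 2) {k : Fin n → ℤ} (hk : k ≠ 0) :
    (c ^ 2 - c) * knorm k ^ 4 ≤ ksSymbol L k := by
  have hX := mul_sq_knorm_le hc k
  have hk₁ : 1 ≤ knorm k ^ 2 := one_le_pow₀ (one_le_knorm hk)
  have hy : 0 ≤ c * knorm k ^ 2 := by positivity
  have hgap : 0 ≤ (c - 1) * knorm k ^ 2 := by nlinarith
  unfold ksSymbol
  set X := ∑ i, (2 * Real.pi / L i) ^ 2 * (k i : ℝ) ^ 2
  nlinarith [mul_le_mul hX (show (c - 1) * knorm k ^ 2 ≤ X - 1 by nlinarith) hgap (hy.trans hX)]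

lemma exists_setLIntegral_exp_neg_mul_ksSymbol_le {T : ℝ≥0∞} (hL : ∀ i, 0 < L i)
    (hT : CaseAB L T) :
    ∃ C, 0 < C ∧ ∀ k : Fin n → ℤ, k ≠ 0 →
      ∫⁻ t in timeSet T, ENNReal.ofReal (Real.exp (-(t * ksSymbol L k)))
        ≤ ENNReal.ofReal (C / knorm k ^ 4) := by
  have hts : timeSet T ⊆ Set.Ici 0 := fun t ht => ht.1
  rcases hT with ⟨-, hL2π⟩ | ⟨-, hT⟩
  · obtain ⟨c, hc₁, hc⟩ := exists_lt_le_of_forall_lt (a := 1)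
      fun i => one_lt_pow₀ ((one_lt_div (hL i)).mpr (hL2π i)) two_ne_zero
    have hα : 0 < c ^ 2 - c := by nlinarith
    refine ⟨1 / (c ^ 2 - c), by positivity, fun k hk => ?_⟩
    have hk₄ : 0 < knorm k ^ 4 := by have := one_le_knorm hk; positivity
    convert setLIntegral_exp_neg_mul_le hts (B := 0) (mul_pos hα hk₄) fun t ht =>
      mul_nonpos_of_nonneg_of_nonpos ht.1
        (sub_nonpos.mpr (sq_sub_self_mul_knorm_pow_four_le_ksSymbol hc₁.le hc hk)) using 2
    rw [Real.exp_zero, div_div]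
  · obtain ⟨c, hc₀, hc⟩ := exists_lt_le_of_forall_lt (w := fun i => (2 * Real.pi / L i) ^ 2)
      (a := 0) fun i => by have := hL i; positivity
    refine ⟨2 * Real.exp (T.toReal / 2) / c ^ 2, by positivity, fun k hk => ?_⟩
    have hk₄ : 0 < knorm k ^ 4 := by have := one_le_knorm hk; positivity
    convert setLIntegral_exp_neg_mul_le hts (B := T.toReal / 2)
      (by positivity : 0 < c ^ 2 / 2 * knorm k ^ 4) fun t ht => ?_ using 2
    · field_simp
    · have htT : t ≤ T.toReal := (ENNReal.ofReal_le_iff_le_toReal hT).mp ht.2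
      nlinarith [ht.1, sq_div_two_mul_knorm_pow_four_sub_half_le_ksSymbol hc₀.le hc k]

end Symbol

section Semigroup

variable {n : ℕ} {L : Fin n → ℝ}

lemma setLIntegral_knorm_rpow_mul_norm_ksSemigroup_eq (s : Set ℝ)
    (ψ₀ : (Fin n → ℤ) → ℂ) {k : Fin n → ℤ} (hk : k ≠ 0) (m₁ m₂ : ℝ) :
    ∫⁻ t in s, ENNReal.ofReal (knorm k ^ m₂ * ‖ksSemigroup L ψ₀ t k‖)
      = ENNReal.ofReal (knorm k ^ (m₂ - m₁)) * ENNReal.ofReal (knorm k ^ m₁ * ‖ψ₀ k‖)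
        * ∫⁻ t in s, ENNReal.ofReal (Real.exp (-(t * ksSymbol L k))) := by
  have hk₀ : 0 < knorm k := zero_lt_one.trans_le (one_le_knorm hk)
  rw [← lintegral_const_mul' _ _
    (ENNReal.mul_ne_top ENNReal.ofReal_ne_top ENNReal.ofReal_ne_top)]
  refine lintegral_congr fun t => ?_
  rw [← ENNReal.ofReal_mul (by positivity), ← ENNReal.ofReal_mul (by positivity)]
  simp only [ksSemigroup, norm_mul, Complex.norm_real, Real.norm_eq_abs,
    abs_of_pos (Real.exp_pos _), Real.rpow_sub hk₀]
  field_simp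

lemma calXnorm_ksSemigroup_le {T : ℝ≥0∞} {C : ℝ}
    (hC : ∀ k : Fin n → ℤ, k ≠ 0 →
      ∫⁻ t in timeSet T, ENNReal.ofReal (Real.exp (-(t * ksSymbol L k)))
        ≤ ENNReal.ofReal (C / knorm k ^ 4))
    (m₁ m₂ : ℝ) (ψ₀ : (Fin n → ℤ) → ℂ) :
    calXnorm T m₂ (ksSemigroup L ψ₀)
      ≤ ENNReal.ofReal C * (∑' k : {k : Fin n → ℤ // k ≠ 0},
          ENNReal.ofReal (knorm k.1 ^ (m₂ - m₁ - 4))) * PMnorm m₁ ψ₀ := by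
  rw [← ENNReal.tsum_mul_left, ← ENNReal.tsum_mul_right]
  refine ENNReal.tsum_le_tsum fun ⟨k, hk⟩ => ?_
  have hk₀ : 0 < knorm k := zero_lt_one.trans_le (one_le_knorm hk)
  rw [setLIntegral_knorm_rpow_mul_norm_ksSemigroup_eq _ _ hk m₁]
  calc ENNReal.ofReal (knorm k ^ (m₂ - m₁)) * ENNReal.ofReal (knorm k ^ m₁ * ‖ψ₀ k‖)
        * ∫⁻ t in timeSet T, ENNReal.ofReal (Real.exp (-(t * ksSymbol L k)))
      ≤ ENNReal.ofReal (knorm k ^ (m₂ - m₁)) * PMnorm m₁ ψ₀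
          * ENNReal.ofReal (C / knorm k ^ 4) := by
        gcongr
        · exact le_iSup (fun j : {j : Fin n → ℤ // j ≠ 0} =>
            ENNReal.ofReal (knorm j.1 ^ m₁ * ‖ψ₀ j.1‖)) ⟨k, hk⟩
        · exact hC k hk
    _ = ENNReal.ofReal C * ENNReal.ofReal (knorm k ^ (m₂ - m₁ - 4)) * PMnorm m₁ ψ₀ := by
        rw [mul_right_comm, ← ENNReal.ofReal_mul (by positivity),
          ← ENNReal.ofReal_mul' (by positivity), Real.rpow_sub hk₀ (m₂ - m₁),
          Real.rpow_ofNat]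
        ring_nf

end Semigroup

theorem semigroup_PM_to_X_estimate_general {n : ℕ}
    (L : Fin n → ℝ) (hL : ∀ i, 0 < L i) (T : ℝ≥0∞) (hT : CaseAB L T)
    (m₁ m₂ : ℝ) (hm : m₂ - m₁ - 4 < -(n : ℝ)) :
    ∃ K : ℝ, 0 < K ∧ ∀ ψ₀ : (Fin n → ℤ) → ℂ, PMnorm m₁ ψ₀ ≠ ⊤ →
      calXnorm T m₂ (ksSemigroup L ψ₀) ≤ ENNReal.ofReal K * PMnorm m₁ ψ₀ := by
  obtain ⟨C, hC₀, hC⟩ := exists_setLIntegral_exp_neg_mul_ksSymbol_le hL hT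
  set S := ∑' k : {k : Fin n → ℤ // k ≠ 0}, ENNReal.ofReal (knorm k.1 ^ (m₂ - m₁ - 4))
  have hS : S ≠ ⊤ := tsum_ofReal_knorm_rpow_ne_top hm
  refine ⟨C * S.toReal + 1, by positivity, fun ψ₀ _ => ?_⟩
  calc calXnorm T m₂ (ksSemigroup L ψ₀) ≤ ENNReal.ofReal C * S * PMnorm m₁ ψ₀ :=
        calXnorm_ksSemigroup_le hC m₁ m₂ ψ₀
    _ ≤ ENNReal.ofReal (C * S.toReal + 1) * PMnorm m₁ ψ₀ := by
        gcongr
        rw [ENNReal.ofReal_add (by positivity) zero_le_one, ENNReal.ofReal_mul hC₀.le,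
          ENNReal.ofReal_toReal hS]
        exact le_self_add

/-- parabolic gain of regularity for the semigroup: if
`m₂ - m₁ - 4 < -n` then `S : PM^{m₁} → 𝒳^{m₂}` with
`‖Sψ₀‖_{𝒳^{m₂}} ≤ K ‖ψ₀‖_{PM^{m₁}}`. -/
theorem semigroup_PM_to_X_estimate {n : ℕ} (hn : 1 ≤ n)
    (L : Fin n → ℝ) (hL : ∀ i, 0 < L i) (T : ℝ≥0∞) (hT : CaseAB L T)
    (m₁ m₂ : ℝ) (hm : m₂ - m₁ - 4 < -(n : ℝ)) :
    ∃ K : ℝ, 0 < K ∧ ∀ ψ₀ : (Fin n → ℤ) → ℂ, PMnorm m₁ ψ₀ ≠ ⊤ →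
      calXnorm T m₂ (ksSemigroup L ψ₀) ≤ ENNReal.ofReal K * PMnorm m₁ ψ₀ :=
  semigroup_PM_to_X_estimate_general L hL T hT m₁ m₂ hm
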